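/- arXiv:1805.08741 — 2 statements merged into one kernel-verified Lean document; each statement's English description precedes it below -/
import Mathlib

section
/- Let X be an infinite-dimensional complex Banach space, T a bounded linear operator on X, and n ≥ 1 an integer. Then 0 is not an accumulation point of the Fredholm spectrum σ_F(T) if and only if 0 is not an accumulation point of σ_F(T^n). (That is, T is pseudo-B-Fredholm if and only if T^n is pseudo-B-Fredholm.) -/
/-! The identities `T ^ n - μ ^ n = (T - μ) * G = G * (T - μ)` (geometric sums) show that
`T ^ n - μ ^ n` Fredholm forces `T - μ` Fredholm, while conversely `T ^ n - c` is the product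
of the `T - μ` over the `n`-th roots `μ` of `c`. Hence `σ_F(T ^ n) = {μ ^ n | μ ∈ σ_F(T)}`, and
since `z ↦ z ^ n` pulls the punctured neighbourhoods of `0` back to themselves, `0` accumulates
in one set iff it accumulates in the other. -/

open Filter Topology Polynomial

variable {E : Type*} [NormedAddCommGroup E] [NormedSpace ℂ E]

/-- A (continuous linear) operator is Fredholm if its kernel is finite-dimensional and
its range has finite codimension. -/
def IsFredholm (T : E →L[ℂ] E) : Prop :=
  FiniteDimensional ℂ (LinearMap.ker (T : E →ₗ[ℂ] E)) ∧ FiniteDimensional ℂ (E ⧸ LinearMap.range (T : E →ₗ[ℂ] E))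

/-- The Fredholm (essential) spectrum. -/
def fredholmSpectrum (T : E →L[ℂ] E) : Set ℂ := {lam : ℂ | ¬ IsFredholm (T - lam • 1)}

/-- `T` is pseudo-B-Fredholm if `0` is not an accumulation point of its Fredholm spectrum. -/
def IsPseudoBFredholm (T : E →L[ℂ] E) : Prop :=
  ¬ AccPt (0 : ℂ) (Filter.principal (fredholmSpectrum T))

/-- A Riesz operator: `T - λ` is Fredholm for every `λ ≠ 0`. -/
def IsRiesz (T : E →L[ℂ] E) : Prop := ∀ lam : ℂ, lam ≠ 0 → IsFredholm (T - lam • 1)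

lemma range_pow_invariant (T : E →L[ℂ] E) (n : ℕ) :
    ∀ x ∈ LinearMap.range ((T ^ n : E →L[ℂ] E) : E →ₗ[ℂ] E), T x ∈ LinearMap.range ((T ^ n : E →L[ℂ] E) : E →ₗ[ℂ] E) := by
  rintro x ⟨y, rfl⟩
  refine ⟨T y, ?_⟩
  show (T ^ n) (T y) = T ((T ^ n) y)
  have h1 : (T ^ n) (T y) = (T ^ n * T) y := rfl
  have h2 : T ((T ^ n) y) = (T * T ^ n) y := rfl
  rw [h1, h2, ← pow_succ, ← pow_succ']

/-- Restriction of a continuous linear operator to an invariant submodule. -/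
def restrictCLM (T : E →L[ℂ] E) (M : Submodule ℂ E) (h : ∀ x ∈ M, T x ∈ M) : M →L[ℂ] M where
  toLinearMap := (T : E →ₗ[ℂ] E).restrict h
  cont := Continuous.subtype_mk (T.continuous.comp continuous_subtype_val) _

/-- `T` is B-Fredholm if for some `n` the range of `T ^ n` is closed and the operator induced
by `T` on it is Fredholm. -/
def IsBFredholm (T : E →L[ℂ] E) : Prop :=
  ∃ n : ℕ, IsClosed ((LinearMap.range ((T ^ n : E →L[ℂ] E) : E →ₗ[ℂ] E) : Submodule ℂ E) : Set E) ∧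
    IsFredholm (restrictCLM T (LinearMap.range ((T ^ n : E →L[ℂ] E) : E →ₗ[ℂ] E)) (range_pow_invariant T n))

/-- The essential ascent: the least `n` with `ker T ∩ range (T ^ n)` finite-dimensional. -/
noncomputable def essAscent (T : E →L[ℂ] E) : ℕ∞ :=
  ⨅ n ∈ {m : ℕ | FiniteDimensional ℂ ↥(LinearMap.ker (T : E →ₗ[ℂ] E) ⊓ LinearMap.range ((T ^ m : E →L[ℂ] E) : E →ₗ[ℂ] E))}, (n : ℕ∞)

/-- The essential descent: the least `n` with `range T + ker (T ^ n)` of finite codimension. -/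
noncomputable def essDescent (T : E →L[ℂ] E) : ℕ∞ :=
  ⨅ n ∈ {m : ℕ | FiniteDimensional ℂ (E ⧸ (LinearMap.range (T : E →ₗ[ℂ] E) ⊔ LinearMap.ker ((T ^ m : E →L[ℂ] E) : E →ₗ[ℂ] E)))}, (n : ℕ∞)

/-- `0` is a pole (or regular point) of order at most `m` of the resolvent of `Π(T)` in the
Calkin algebra: there is `S` with `TS - ST`, `STS - S` and `T^(m+1) S - T^m` all compact. -/
def DrazinAt (T : E →L[ℂ] E) (m : ℕ) : Prop :=
  ∃ S : E →L[ℂ] E, IsCompactOperator ⇑(T * S - S * T) ∧ IsCompactOperator ⇑(S * T * S - S) ∧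
    IsCompactOperator ⇑(T ^ (m + 1) * S - T ^ m)

/-- `Π(T)` is Drazin invertible in the Calkin algebra. -/
def CalkinDrazin (T : E →L[ℂ] E) : Prop := ∃ m : ℕ, DrazinAt T m

/-- A power compact operator. -/
def IsPowerCompact (K : E →L[ℂ] E) : Prop := ∃ m : ℕ, 1 ≤ m ∧ IsCompactOperator ⇑(K ^ m)

/-- An inessential operator: `1 - S * J` is Fredholm for every `S`. -/
def IsInessential (J : E →L[ℂ] E) : Prop := ∀ S : E →L[ℂ] E, IsFredholm (1 - S * J)

/-- The norm of `Π(A)` in the Calkin algebra: `inf {‖A + K‖ : K compact}`. -/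
noncomputable def calkinNorm (A : E →L[ℂ] E) : ℝ :=
  sInf {r : ℝ | ∃ K : E →L[ℂ] E, IsCompactOperator ⇑K ∧ r = ‖A + K‖}

/-- The ergodic means `M_n(T) = (1 + T + T² + ⋯ + Tⁿ)/n`. -/
noncomputable def meanOp (T : E →L[ℂ] E) (n : ℕ) : E →L[ℂ] E :=
  ((n : ℂ))⁻¹ • ∑ i ∈ Finset.range (n + 1), T ^ i


namespace LinearMap

variable {K U V W : Type*} [DivisionRing K] [AddCommGroup U] [Module K U] [AddCommGroup V]
  [Module K V] [AddCommGroup W] [Module K W] {f : V →ₗ[K] W} {g : U →ₗ[K] V}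

theorem finiteDimensional_ker_comp (hf : FiniteDimensional K (ker f))
    (hg : FiniteDimensional K (ker g)) : FiniteDimensional K (ker (f ∘ₗ g)) := by
  rw [ker_comp]
  infer_instance

theorem finiteDimensional_quotient_range_comp (hf : FiniteDimensional K (W ⧸ range f))
    (hg : FiniteDimensional K (V ⧸ range g)) : FiniteDimensional K (W ⧸ range (f ∘ₗ g)) := by
  rw [range_comp]
  infer_instance

theorem finiteDimensional_ker_of_comp (h : FiniteDimensional K (ker (f ∘ₗ g))) :
    FiniteDimensional K (ker g) :=
  Submodule.finiteDimensional_of_le (ker_le_ker_comp g f)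

theorem finiteDimensional_quotient_range_of_comp
    (h : FiniteDimensional K (W ⧸ range (f ∘ₗ g))) :
    FiniteDimensional K (W ⧸ range f) :=
  Module.Finite.of_surjective _ (Submodule.factor_surjective (range_comp_le_range g f))

end LinearMap

theorem isFredholm_one : IsFredholm (1 : E →L[ℂ] E) := by
  refine ⟨?_, ?_⟩
  · rw [ContinuousLinearMap.toLinearMap_one, Module.End.one_eq_id, LinearMap.ker_id]
    infer_instance
  · rw [ContinuousLinearMap.toLinearMap_one, Module.End.one_eq_id, LinearMap.range_id]
    infer_instance

theorem IsFredholm.mul {A B : E →L[ℂ] E} (hA : IsFredholm A) (hB : IsFredholm B) :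
    IsFredholm (A * B) :=
  ⟨LinearMap.finiteDimensional_ker_comp hA.1 hB.1,
    LinearMap.finiteDimensional_quotient_range_comp hA.2 hB.2⟩

theorem isFredholm_list_prod {l : List (E →L[ℂ] E)} (h : ∀ A ∈ l, IsFredholm A) :
    IsFredholm l.prod :=
  List.prod_induction _ (fun _ _ => IsFredholm.mul) isFredholm_one h

theorem isFredholm_of_isFredholm_mul_of_isFredholm_mul {A B : E →L[ℂ] E}
    (hBA : IsFredholm (B * A)) (hAB : IsFredholm (A * B)) : IsFredholm A :=
  ⟨LinearMap.finiteDimensional_ker_of_comp hBA.1,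
    LinearMap.finiteDimensional_quotient_range_of_comp hAB.2⟩

theorem pow_sub_smul_one_eq_list_prod {K A : Type*} [Field K] [IsAlgClosed K] [Ring A]
    [Algebra K A] (a : A) {n : ℕ} (hn : n ≠ 0) (c : K) :
    a ^ n - c • 1 = ((nthRoots n c).toList.map fun μ => a - μ • 1).prod := by
  have hfac : X ^ n - C c = ((nthRoots n c).toList.map fun μ => X - C μ).prod := by
    rw [← Multiset.prod_coe, ← Multiset.map_coe, Multiset.coe_toList]
    exact (IsAlgClosed.splits _).eq_prod_roots_of_monic (monic_X_pow_sub_C c hn)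
  have := congrArg (aeval a) hfac
  rw [map_list_prod, List.map_map] at this
  simpa only [map_sub, map_pow, aeval_X, aeval_C, Algebra.algebraMap_eq_smul_one, Function.comp_def]
    using this

theorem isFredholm_pow_sub_smul_one_iff (T : E →L[ℂ] E) {n : ℕ} (hn : n ≠ 0) (c : ℂ) :
    IsFredholm (T ^ n - c • 1) ↔ ∀ μ : ℂ, μ ^ n = c → IsFredholm (T - μ • 1) := by
  constructor
  · rintro h μ rfl
    have hcomm : Commute T (μ • 1) := (Commute.one_right T).smul_right μ
    have hpow : (μ • 1 : E →L[ℂ] E) ^ n = μ ^ n • 1 := by rw [_root_.smul_pow, one_pow]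
    rw [← hpow] at h
    exact isFredholm_of_isFredholm_mul_of_isFredholm_mul (hcomm.geom_sum₂_mul n ▸ h)
      (hcomm.mul_geom_sum₂ n ▸ h)
  · intro h
    rw [pow_sub_smul_one_eq_list_prod T hn c]
    refine isFredholm_list_prod fun A hA => ?_
    obtain ⟨μ, hμ, rfl⟩ := List.mem_map.mp hA
    exact h μ ((mem_nthRoots (Nat.pos_of_ne_zero hn)).mp (Multiset.mem_toList.mp hμ))

theorem fredholmSpectrum_pow (T : E →L[ℂ] E) {n : ℕ} (hn : n ≠ 0) :
    fredholmSpectrum (T ^ n) = (· ^ n) '' fredholmSpectrum T := by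
  ext c
  simp only [fredholmSpectrum, Set.mem_ofPred_eq, Set.mem_image,
    isFredholm_pow_sub_smul_one_iff T hn, not_forall, exists_prop, and_comm]

section PowNhds

variable {𝕜 : Type*} [NormedDivisionRing 𝕜] {n : ℕ}

theorem comap_pow_nhds_zero (hn : n ≠ 0) : comap (· ^ n : 𝕜 → 𝕜) (𝓝 0) = 𝓝 0 := by
  refine le_antisymm ?_ ((continuous_pow n).tendsto' 0 0 (zero_pow hn)).le_comap
  refine Metric.nhds_basis_ball.ge_iff.2 fun ε hε =>
    mem_comap.2 ⟨_, Metric.ball_mem_nhds 0 (pow_pos hε n), fun z hz => ?_⟩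
  simp only [Set.mem_preimage, mem_ball_zero_iff, norm_pow] at hz ⊢
  exact lt_of_pow_lt_pow_left₀ n hε.le hz

theorem comap_pow_nhdsNE_zero (hn : n ≠ 0) : comap (· ^ n : 𝕜 → 𝕜) (𝓝[≠] 0) = 𝓝[≠] 0 := by
  rw [nhdsWithin, comap_inf, comap_principal, comap_pow_nhds_zero hn]
  congr 2
  ext z
  simp [pow_eq_zero_iff hn]

theorem accPt_zero_image_pow_iff (hn : n ≠ 0) {S : Set 𝕜} :
    AccPt 0 (𝓟 ((· ^ n) '' S)) ↔ AccPt 0 (𝓟 S) := by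
  rw [accPt_iff_frequently_nhdsNE, accPt_iff_frequently_nhdsNE]
  conv_rhs => rw [← comap_pow_nhdsNE_zero hn, frequently_comap]
  simp only [Set.mem_image, and_comm]

end PowNhds

variable {X : Type*} [NormedAddCommGroup X] [NormedSpace ℂ X] [CompleteSpace X]

theorem pseudoBFredholm_pow_iff_general (T : X →L[ℂ] X) (n : ℕ)
    (hn : 1 ≤ n) :
    IsPseudoBFredholm T ↔ IsPseudoBFredholm (T ^ n) := by
  have hn₀ : n ≠ 0 := Nat.one_le_iff_ne_zero.mp hn
  rw [IsPseudoBFredholm, IsPseudoBFredholm, fredholmSpectrum_pow T hn₀,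
    accPt_zero_image_pow_iff hn₀]

/-- `T` is pseudo-B-Fredholm iff `T ^ n` is pseudo-B-Fredholm, for every `n ≥ 1`. -/
theorem pseudoBFredholm_pow_iff (hX : ¬ FiniteDimensional ℂ X) (T : X →L[ℂ] X) (n : ℕ)
    (hn : 1 ≤ n) :
    IsPseudoBFredholm T ↔ IsPseudoBFredholm (T ^ n) :=
  pseudoBFredholm_pow_iff_general T n hn
end

section
/- Let X be an infinite-dimensional complex Banach space and T a B-Fredholm bounded linear operator on X with finite essential ascent and finite essential descent both equal to d. If d = 0, or if the range R(T^{d−1}) is closed, then 0 is a pole of the resolvent of Π(T) of order d: the least m ∈ ℕ for which there exists S ∈ L(X) with TS − ST, STS − S, and T^{m+1}S − T^m all compact is equal to d. -/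
/-!
Upper bound. The B-Fredholm index `n` satisfies `d ≤ n`, because `ker T ∩ R(T^n)` is the kernel of
the Fredholm operator `T_n`. Finiteness of `codim (R(T) + ker T^k)` for `k ≥ d` makes each
`R(T^k)` a finite-dimensional extension of `R(T^(k+1))`, so `R(T^d)` is closed, and the operator
`T₀` induced on the Banach space `R(T^d)` is Fredholm. By Atkinson's theorem `T₀` is invertible
modulo compacts, say with inverse `B`; then `S = B^(d+1) T^d` (viewed in `L(X)`) commutes with `T`
and `T^(d+1) S = T^d` in the Calkin algebra, and `T^d S^(d+1)` is a Drazin inverse of index `d`.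

Lower bound. If `S` works for some `m < d`, then `T^m - S T^(m+1)` is compact and maps a closed
subspace of `ker T^(m+1)` onto the closed subspace `ker T ∩ R(T^(d-1))`. A compact operator with
closed range has finite rank, contradicting `a_e(T) = d`.
-/

open Filter Topology Polynomial

variable {E : Type*} [NormedAddCommGroup E] [NormedSpace ℂ E]

variable {X : Type*} [NormedAddCommGroup X] [NormedSpace ℂ X] [CompleteSpace X]


open LinearMap (ker range)
open scoped LinearMap.FiniteRangeSetoid

section Calkin

variable (𝕜 V : Type*) [NontriviallyNormedField 𝕜] [NormedAddCommGroup V] [NormedSpace 𝕜 V]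

def compactOperatorIdeal : TwoSidedIdeal (V →L[𝕜] V) :=
  .mk' {f | IsCompactOperator f} isCompactOperator_zero .add .neg
    (fun {x _} hy ↦ hy.clm_comp x) (fun {_ y} hx ↦ hx.comp_clm y)

abbrev CalkinAlgebra : Type _ := (compactOperatorIdeal 𝕜 V).ringCon.Quotient

variable {𝕜 V}

def calkinMk : (V →L[𝕜] V) →+* CalkinAlgebra 𝕜 V := (compactOperatorIdeal 𝕜 V).ringCon.mk'

lemma calkinMk_surjective : Function.Surjective (calkinMk (𝕜 := 𝕜) (V := V)) :=
  Quotient.mk''_surjective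

lemma calkinMk_eq_zero_iff {f : V →L[𝕜] V} : calkinMk f = 0 ↔ IsCompactOperator f := by
  rw [← map_zero calkinMk]
  exact (RingCon.eq _).trans <| ((compactOperatorIdeal 𝕜 V).rel_iff f 0).trans <| by
    rw [sub_zero]; exact TwoSidedIdeal.mem_mk' ..

lemma calkinMk_eq_iff {f g : V →L[𝕜] V} :
    calkinMk f = calkinMk g ↔ IsCompactOperator ⇑(f - g) := by
  rw [← calkinMk_eq_zero_iff, map_sub, sub_eq_zero]

end Calkin

section Banach

variable {𝕜 : Type*} [RCLike 𝕜] {V W : Type*} [NormedAddCommGroup V] [NormedSpace 𝕜 V]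
  [NormedAddCommGroup W] [NormedSpace 𝕜 W]

lemma isCompactOperator_of_finiteDimensional_range (f : V →L[𝕜] W)
    [FiniteDimensional 𝕜 (range f.toLinearMap)] : IsCompactOperator f := by
  have : ProperSpace (range f.toLinearMap) := FiniteDimensional.proper 𝕜 _
  exact (isCompactOperator_of_locallyCompactSpace_dom f.rangeRestrict).clm_comp
    (range f.toLinearMap).subtypeL

lemma calkinMk_eq_of_equiv {f g : V →L[𝕜] V} (h : f.toLinearMap ≈ g.toLinearMap) :
    calkinMk f = calkinMk g := by
  rw [LinearMap.FiniteRangeSetoid.equiv_iff_hasFiniteRange, ← ContinuousLinearMap.toLinearMap_sub,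
    LinearMap.HasFiniteRange, Submodule.fg_iff_finiteDimensional] at h
  exact calkinMk_eq_iff.2 (isCompactOperator_of_finiteDimensional_range (f - g))

variable [CompleteSpace V] [CompleteSpace W]

theorem IsCompactOperator.finiteDimensional_range_of_isClosed {K : V →L[𝕜] W}
    (hK : IsCompactOperator K) (hR : IsClosed (range K.toLinearMap : Set W)) :
    FiniteDimensional 𝕜 (range K.toLinearMap) := by
  have := hR.completeSpace_coe
  obtain ⟨C, hC, hCK⟩ := hK.codRestrict (LinearMap.mem_range_self K.toLinearMap) hR
  have hopen := K.rangeRestrict.isOpenMap (LinearMap.surjective_rangeRestrict _)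
  have h0 : K.rangeRestrict '' (K.rangeRestrict ⁻¹' C) ∈ 𝓝 (K.rangeRestrict 0) :=
    hopen.image_mem_nhds hCK
  rw [map_zero] at h0
  have := hC.locallyCompactSpace_of_mem_nhds_of_addGroup
    (Filter.mem_of_superset h0 (Set.image_preimage_subset _ _))
  exact FiniteDimensional.of_locallyCompactSpace 𝕜

theorem isClosed_range_of_finiteDimensional_quotient (A : V →L[𝕜] W)
    [FiniteDimensional 𝕜 (W ⧸ range A.toLinearMap)] :
    IsClosed (range A.toLinearMap : Set W) := by
  obtain ⟨G, hG⟩ := Submodule.exists_isCompl (range A.toLinearMap)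
  have : FiniteDimensional 𝕜 G := (Submodule.quotientEquivOfIsCompl _ _ hG).finiteDimensional
  let C : V × G →L[𝕜] W := A.coprod G.subtypeL
  have hC : Function.Surjective C := LinearMap.range_eq_top.1 <| by
    rw [ContinuousLinearMap.coe_coprod, LinearMap.range_coprod]
    simpa using hG.sup_eq_top
  have hpre : C ⁻¹' range A.toLinearMap = {p | p.2 = 0} := by
    ext ⟨x, g⟩
    simp only [Set.mem_preimage, SetLike.mem_coe, Set.mem_ofPred_eq, C,
      ContinuousLinearMap.coprod_apply, Submodule.coe_subtypeL, Submodule.coe_subtype]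
    have hx : A x ∈ range A.toLinearMap := LinearMap.mem_range_self _ x
    rw [Submodule.add_mem_iff_right _ hx]
    exact ⟨fun hg ↦ by simpa using hG.disjoint.le_bot ⟨hg, g.2⟩, fun hg ↦ by simp [hg]⟩
  rw [← (C.isQuotientMap hC).isClosed_preimage, hpre]
  exact isClosed_eq continuous_snd continuous_const

theorem isInvertible_restrict_of_isCompl_ker {A : V →L[𝕜] W} {V₁ : Submodule 𝕜 V}
    (hV₁ : IsCompl (ker A.toLinearMap) V₁) (hV₁closed : IsClosed (V₁ : Set V))
    (hR : IsClosed (range A.toLinearMap : Set W)) (hmaps : Set.MapsTo A V₁ (range A.toLinearMap)) :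
    (A.restrict hmaps).IsInvertible := by
  have := hV₁closed.completeSpace_coe
  have := hR.completeSpace_coe
  refine ⟨ContinuousLinearEquiv.ofBijective _ ?_ ?_, ContinuousLinearEquiv.coe_ofBijective ..⟩
  · rw [LinearMap.ker_eq_bot']
    intro x hx
    have hx' : (x : V) ∈ ker A.toLinearMap ⊓ V₁ := ⟨congrArg Subtype.val hx, x.2⟩
    rw [hV₁.inf_eq_bot, Submodule.mem_bot] at hx'
    exact Subtype.ext hx'
  · rw [LinearMap.range_eq_top]
    rintro ⟨_, z, rfl⟩
    have hz : z ∈ ker A.toLinearMap ⊔ V₁ := hV₁.sup_eq_top ▸ Submodule.mem_top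
    obtain ⟨k, hk, e, he, rfl⟩ := Submodule.mem_sup.1 hz
    have hk0 : A k = 0 := hk
    exact ⟨⟨e, he⟩, Subtype.ext (show A e = A (k + e) by rw [map_add, hk0, zero_add])⟩

theorem isUnit_calkinMk_of_finiteDimensional (A : V →L[𝕜] V)
    [FiniteDimensional 𝕜 (ker A.toLinearMap)] [FiniteDimensional 𝕜 (V ⧸ range A.toLinearMap)] :
    IsUnit (calkinMk A) := by
  have hR := isClosed_range_of_finiteDimensional_quotient A
  obtain ⟨V₁, hV₁⟩ :=
    (Submodule.ClosedComplemented.of_finiteDimensional (ker A.toLinearMap)).exists_isTopCompl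
  have hV₁closed : IsClosed (V₁ : Set V) := hV₁.isClosed'
  have : V₁.CoFG := Submodule.FG.cofg_of_isCompl hV₁.isCompl
    ((Submodule.fg_iff_finiteDimensional _).2 inferInstance)
  have hmaps : Set.MapsTo A V₁ (range A.toLinearMap) := fun x _ ↦ LinearMap.mem_range_self _ x
  have hA := ContinuousLinearMap.IsFredholm.of_isInvertible_restrict hV₁closed hR hmaps
    (isInvertible_restrict_of_isCompl_ker hV₁.isCompl hV₁closed hR hmaps)
  obtain ⟨B, hBA, hAB⟩ := hA.exists_isQuasiInverse
  refine isUnit_iff_exists.2 ⟨calkinMk B, ?_, ?_⟩ <;> rw [← map_mul, ← map_one calkinMk]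
  exacts [calkinMk_eq_of_equiv hAB, calkinMk_eq_of_equiv hBA]

end Banach

lemma isLeast_of_biInf_natCast_eq {S : Set ℕ} {d : ℕ} (h : ⨅ n ∈ S, (n : ℕ∞) = d) :
    IsLeast S d := by
  obtain rfl | hS := S.eq_empty_or_nonempty
  · simp at h
  rw [← ENat.natCast_sInf hS, Nat.cast_inj] at h
  exact h ▸ ⟨Nat.sInf_mem hS, fun _ ↦ Nat.sInf_le⟩

theorem Commute.exists_drazin_of_pow_succ_mul_eq {M : Type*} [Monoid M] {a s : M}
    (hc : Commute a s) {d : ℕ} (h : a ^ (d + 1) * s = a ^ d) :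
    ∃ b, Commute a b ∧ b * a * b = b ∧ a ^ (d + 1) * b = a ^ d := by
  have hpow : ∀ k, a ^ (d + k) * s ^ k = a ^ d := by
    intro k
    induction k with
    | zero => simp
    | succ k ih =>
      rw [show d + (k + 1) = k + (d + 1) by omega, pow_add, pow_succ' s, mul_assoc,
        ← mul_assoc (a ^ (d + 1)), h, ← mul_assoc, ← pow_add, add_comm k d, ih]
  refine ⟨a ^ d * s ^ (d + 1), ((Commute.refl a).pow_right d).mul_right (hc.pow_right _), ?_, ?_⟩
  · calc a ^ d * s ^ (d + 1) * a * (a ^ d * s ^ (d + 1))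
        = a ^ d * (s ^ (d + 1) * a ^ (d + 1)) * s ^ (d + 1) := by
          rw [pow_succ' a d]; simp only [mul_assoc]
      _ = a ^ (d + (d + 1)) * s ^ (d + 1) * s ^ (d + 1) := by
          rw [← (hc.pow_pow (d + 1) (d + 1)).eq, pow_add a d (d + 1)]; simp only [mul_assoc]
      _ = a ^ d * s ^ (d + 1) := by rw [hpow]
  · rw [← mul_assoc, ← pow_add, add_comm (d + 1) d, hpow]

lemma drazinAt_iff_calkinMk (T : E →L[ℂ] E) (m : ℕ) :
    DrazinAt T m ↔ ∃ s, Commute (calkinMk T) s ∧ s * calkinMk T * s = s ∧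
      calkinMk T ^ (m + 1) * s = calkinMk T ^ m := by
  rw [calkinMk_surjective.exists]
  simp only [DrazinAt, ← calkinMk_eq_iff, map_mul, map_pow]
  rfl

lemma range_pow_le_range_pow (T : E →L[ℂ] E) {k l : ℕ} (h : k ≤ l) :
    range (T ^ l).toLinearMap ≤ range (T ^ k).toLinearMap := by
  rintro _ ⟨y, rfl⟩
  refine ⟨(T ^ (l - k)) y, ?_⟩
  rw [ContinuousLinearMap.coe_coe, ← mul_apply_eq_comp, ← pow_add, Nat.add_sub_cancel' h]
  rfl

lemma ker_pow_le_ker_pow (T : E →L[ℂ] E) {k l : ℕ} (h : k ≤ l) :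
    ker (T ^ k).toLinearMap ≤ ker (T ^ l).toLinearMap := by
  simpa [ContinuousLinearMap.toLinearMap_pow] using
    (LinearMap.iterateKer T.toLinearMap).monotone h

lemma exists_range_pow_eq_range_pow_succ_sup (T : E →L[ℂ] E) (k : ℕ)
    (hk : (range T.toLinearMap ⊔ ker (T ^ k).toLinearMap).CoFG) :
    ∃ F : Submodule ℂ E, FiniteDimensional ℂ F ∧
      range (T ^ k).toLinearMap = range (T ^ (k + 1)).toLinearMap ⊔ F := by
  obtain ⟨G, hG⟩ := Submodule.exists_isCompl (range T.toLinearMap ⊔ ker (T ^ k).toLinearMap)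
  have : FiniteDimensional ℂ G := (Submodule.quotientEquivOfIsCompl _ _ hG).finiteDimensional
  refine ⟨G.map (T ^ k).toLinearMap, inferInstance, ?_⟩
  rw [← Submodule.map_top, ← hG.sup_eq_top, Submodule.map_sup, Submodule.map_sup,
    ← LinearMap.range_comp, LinearMap.le_ker_iff_map.1 le_rfl, sup_bot_eq, pow_succ,
    ContinuousLinearMap.toLinearMap_mul, Module.End.mul_eq_comp]

lemma exists_range_pow_le_range_pow_sup (T : E →L[ℂ] E) {d n : ℕ} (hdn : d ≤ n)
    (hd : (range T.toLinearMap ⊔ ker (T ^ d).toLinearMap).CoFG) :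
    ∃ F : Submodule ℂ E, FiniteDimensional ℂ F ∧
      range (T ^ d).toLinearMap ≤ range (T ^ n).toLinearMap ⊔ F := by
  induction n, hdn using Nat.le_induction with
  | base => exact ⟨⊥, inferInstance, le_sup_left⟩
  | succ n hdn ih =>
    obtain ⟨F, hF, hle⟩ := ih
    have hn := hd.of_le (sup_le_sup_left (ker_pow_le_ker_pow T hdn) _)
    obtain ⟨F', hF', heq⟩ := exists_range_pow_eq_range_pow_succ_sup T n hn
    refine ⟨F' ⊔ F, inferInstance, hle.trans ?_⟩
    rw [heq, sup_assoc]

lemma isClosed_range_pow_of_le (T : E →L[ℂ] E) {d n : ℕ} (hdn : d ≤ n)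
    (hd : (range T.toLinearMap ⊔ ker (T ^ d).toLinearMap).CoFG)
    (hn : IsClosed (range (T ^ n).toLinearMap : Set E)) :
    IsClosed (range (T ^ d).toLinearMap : Set E) := by
  obtain ⟨F, hF, hle⟩ := exists_range_pow_le_range_pow_sup T hdn hd
  have heq : range (T ^ d).toLinearMap
      = range (T ^ n).toLinearMap ⊔ (F ⊓ range (T ^ d).toLinearMap) := by
    rw [← sup_inf_assoc_of_le _ (range_pow_le_range_pow T hdn), inf_eq_right.2 hle]
  rw [heq]
  exact Submodule.isClosed_sup_finiteDimensional _ _ hn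

lemma finiteDimensional_ker_restrictCLM_iff (T : E →L[ℂ] E) (M : Submodule ℂ E)
    (h : ∀ x ∈ M, T x ∈ M) :
    FiniteDimensional ℂ (ker (restrictCLM T M h).toLinearMap) ↔
      FiniteDimensional ℂ ↥(ker T.toLinearMap ⊓ M) := by
  rw [show (restrictCLM T M h).toLinearMap = T.toLinearMap.restrict h from rfl,
    LinearMap.ker_restrict, inf_comm, ← Submodule.map_comap_subtype]
  exact Module.Finite.equiv_iff (Submodule.equivMapOfInjective _ M.injective_subtype _)

lemma finiteDimensional_quotient_range_restrictCLM_pow (T : E →L[ℂ] E) (k : ℕ)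
    (hk : (range T.toLinearMap ⊔ ker (T ^ k).toLinearMap).CoFG) :
    FiniteDimensional ℂ (range (T ^ k).toLinearMap ⧸
      range (restrictCLM T _ (range_pow_invariant T k)).toLinearMap) := by
  set R := range (restrictCLM T _ (range_pow_invariant T k)).toLinearMap
  -- `T ^ k` induces a surjection `E ⧸ (R(T) + ker T^k) → R(T^k) ⧸ R(T^(k+1))`.
  set f := R.mkQ ∘ₗ (T ^ k).toLinearMap.rangeRestrict
  have hf : Function.Surjective f :=
    R.mkQ_surjective.comp (T ^ k).toLinearMap.surjective_rangeRestrict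
  have hle : range T.toLinearMap ⊔ ker (T ^ k).toLinearMap ≤ ker f := by
    refine sup_le ?_ fun x hx ↦ ?_
    · rintro _ ⟨y, rfl⟩
      refine (Submodule.Quotient.mk_eq_zero R).2 ⟨(T ^ k).toLinearMap.rangeRestrict y, ?_⟩
      ext
      show T ((T ^ k) y) = (T ^ k) (T y)
      rw [← mul_apply_eq_comp, ← mul_apply_eq_comp, ← pow_succ', pow_succ]
    · have h0 : (T ^ k).toLinearMap.rangeRestrict x = 0 := Subtype.ext hx
      simp [f, h0]
  exact Module.Finite.of_surjective ((range T.toLinearMap ⊔ ker (T ^ k).toLinearMap).liftQ f hle)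
    (by rw [← LinearMap.range_eq_top, Submodule.range_liftQ, LinearMap.range_eq_top.2 hf])

/-- The witness is `ι B^(d+1) π`, with `ι` the inclusion of `R(T^d)`, `π` the corestriction of
`T ^ d` and `B` an inverse of `T₀ = T|R(T^d)` modulo compacts: `T ι = ι T₀`, `π T = T₀ π` and
`ι π = T^d` reduce both relations to `T₀ B = B T₀ = 1` modulo compacts. -/
lemma exists_commute_pow_succ_mul_of_isUnit (T : E →L[ℂ] E) (d : ℕ)
    (hT : IsUnit (calkinMk (restrictCLM T _ (range_pow_invariant T d)))) :
    ∃ s, Commute (calkinMk T) s ∧ calkinMk T ^ (d + 1) * s = calkinMk T ^ d := by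
  set M := range (T ^ d).toLinearMap
  set T₀ := restrictCLM T M (range_pow_invariant T d)
  obtain ⟨u, hu⟩ := hT
  obtain ⟨B, hB⟩ := calkinMk_surjective (↑u⁻¹ : CalkinAlgebra ℂ M)
  have hT₀B : Commute (calkinMk T₀) (calkinMk B) := by
    rw [← hu, hB]; exact (Commute.refl (u : CalkinAlgebra ℂ M)).units_inv_right
  let π : E →L[ℂ] M := (T ^ d).codRestrict M (LinearMap.mem_range_self _)
  let Φ : (M →L[ℂ] M) → (E →L[ℂ] E) := fun K ↦ M.subtypeL ∘L K ∘L π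
  have hΦ : ∀ K L, calkinMk K = calkinMk L → calkinMk (Φ K) = calkinMk (Φ L) := by
    intro K L h
    rw [calkinMk_eq_iff] at h ⊢
    have hsub : Φ K - Φ L = Φ (K - L) := by
      simp only [Φ, ContinuousLinearMap.comp_sub, ContinuousLinearMap.sub_comp]
    rw [hsub]
    exact (h.comp_clm π).clm_comp M.subtypeL
  have hTΦ : ∀ K, T * Φ K = Φ (T₀ * K) := fun K ↦ rfl
  have hΦT : ∀ K, Φ K * T = Φ (K * T₀) := by
    intro K
    ext x
    show (K (π (T x)) : E) = K (T₀ (π x))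
    congr 2
    ext
    show (T ^ d) (T x) = T ((T ^ d) x)
    rw [← mul_apply_eq_comp, ← mul_apply_eq_comp, ← pow_succ, pow_succ']
  have hTpowΦ : ∀ k K, T ^ k * Φ K = Φ (T₀ ^ k * K) := by
    intro k
    induction k with
    | zero => simp
    | succ k ih => intro K; rw [pow_succ', mul_assoc, ih, hTΦ, pow_succ', mul_assoc]
  refine ⟨calkinMk (Φ (B ^ (d + 1))), ?_, ?_⟩
  · show calkinMk T * _ = _ * calkinMk T
    rw [← map_mul, ← map_mul, hTΦ, hΦT]
    apply hΦ
    rw [map_mul, map_mul, map_pow]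
    exact (hT₀B.pow_right (d + 1)).eq
  · rw [← map_pow, ← map_mul, hTpowΦ]
    refine (hΦ _ 1 ?_).trans rfl
    rw [map_mul, map_pow, map_pow, map_one, ← hT₀B.mul_pow, ← hu, hB, Units.mul_inv, one_pow]

theorem drazinAt_of_isBFredholm {T : X →L[ℂ] X} (hT : IsBFredholm T) {d : ℕ}
    (ha : IsLeast {m | FiniteDimensional ℂ ↥(ker T.toLinearMap ⊓ range (T ^ m).toLinearMap)} d)
    (hd : (range T.toLinearMap ⊔ ker (T ^ d).toLinearMap).CoFG) :
    DrazinAt T d := by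
  obtain ⟨n, hn, hn_ker, -⟩ := hT
  have hdn : d ≤ n := ha.2 ((finiteDimensional_ker_restrictCLM_iff T _ _).1 hn_ker)
  have := (isClosed_range_pow_of_le T hdn hd hn).completeSpace_coe
  have := (finiteDimensional_ker_restrictCLM_iff T _ (range_pow_invariant T d)).2 ha.1
  have := finiteDimensional_quotient_range_restrictCLM_pow T d hd
  obtain ⟨s, hc, hs⟩ :=
    exists_commute_pow_succ_mul_of_isUnit T d (isUnit_calkinMk_of_finiteDimensional _)
  obtain ⟨b, hb⟩ := hc.exists_drazin_of_pow_succ_mul_eq hs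
  exact (drazinAt_iff_calkinMk T d).2 ⟨b, hb⟩

lemma map_pow_ker_pow_succ_inf_comap_range_pow (T : E →L[ℂ] E) {m k : ℕ} (hmk : m ≤ k) :
    (ker (T ^ (m + 1)).toLinearMap ⊓ (range (T ^ k).toLinearMap).comap (T ^ m).toLinearMap).map
      (T ^ m).toLinearMap = ker T.toLinearMap ⊓ range (T ^ k).toLinearMap := by
  ext x
  constructor
  · rintro ⟨z, ⟨hz, hzk⟩, rfl⟩
    refine ⟨?_, hzk⟩
    show T ((T ^ m) z) = 0
    rw [← mul_apply_eq_comp, ← pow_succ']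
    exact hz
  · rintro ⟨hx, y, rfl⟩
    have hTm : (T ^ m) ((T ^ (k - m)) y) = (T ^ k) y := by
      rw [← mul_apply_eq_comp, ← pow_add, Nat.add_sub_cancel' hmk]
    refine ⟨(T ^ (k - m)) y, ⟨?_, ⟨y, hTm.symm⟩⟩, hTm⟩
    show (T ^ (m + 1)) _ = 0
    rw [pow_succ', mul_apply_eq_comp, hTm]
    exact hx

theorem DrazinAt.finiteDimensional_ker_inf_range_pow {T : X →L[ℂ] X} {m k : ℕ}
    (h : DrazinAt T m) (hmk : m ≤ k) (hk : IsClosed (range (T ^ k).toLinearMap : Set X)) :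
    FiniteDimensional ℂ ↥(ker T.toLinearMap ⊓ range (T ^ k).toLinearMap) := by
  obtain ⟨s, hc, -, hs⟩ := (drazinAt_iff_calkinMk T m).1 h
  obtain ⟨S, rfl⟩ := calkinMk_surjective s
  set D := T ^ m - S * T ^ (m + 1)
  have hD : IsCompactOperator D := calkinMk_eq_zero_iff.1 <| by
    rw [map_sub, map_mul, map_pow, map_pow, ← (hc.pow_left (m + 1)).eq, hs, sub_self]
  set Z : Submodule ℂ X :=
    ker (T ^ (m + 1)).toLinearMap ⊓ (range (T ^ k).toLinearMap).comap (T ^ m).toLinearMap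
  have hZ : IsClosed (Z : Set X) :=
    (ContinuousLinearMap.isClosed_ker _).inter (hk.preimage (T ^ m).continuous)
  have := hZ.completeSpace_coe
  have hDZ : D ∘L Z.subtypeL = (T ^ m) ∘L Z.subtypeL := by
    ext ⟨z, hz, -⟩
    have hz0 : (T ^ (m + 1)) z = 0 := hz
    simp [D, hz0]
  have hrange : range (D ∘L Z.subtypeL).toLinearMap =
      ker T.toLinearMap ⊓ range (T ^ k).toLinearMap := by
    rw [hDZ, ContinuousLinearMap.toLinearMap_comp, LinearMap.range_comp,
      Submodule.toLinearMap_subtypeL, Submodule.range_subtype,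
      map_pow_ker_pow_succ_inf_comap_range_pow T hmk]
  rw [← hrange]
  refine (hD.comp_clm Z.subtypeL).finiteDimensional_range_of_isClosed ?_
  rw [hrange]
  exact (ContinuousLinearMap.isClosed_ker T).inter hk

theorem bFredholm_pole_order_eq_general (T : X →L[ℂ] X)
    (hT : IsBFredholm T) (d : ℕ)
    (ha : essAscent T = (d : ℕ∞)) (hd : essDescent T = (d : ℕ∞))
    (hclosed : d = 0 ∨ IsClosed ((LinearMap.range ((T ^ (d - 1) : X →L[ℂ] X) : X →ₗ[ℂ] X) : Submodule ℂ X) : Set X)) :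
    IsLeast {m : ℕ | DrazinAt T m} d := by
  have hasc := isLeast_of_biInf_natCast_eq ha
  refine ⟨drazinAt_of_isBFredholm hT hasc (isLeast_of_biInf_natCast_eq hd).1, fun m hm ↦ ?_⟩
  by_contra! hmd
  obtain hd0 | hcl := hclosed
  · omega
  have := hasc.2 (hm.finiteDimensional_ker_inf_range_pow (by omega : m ≤ d - 1) hcl)
  omega

/-- If `T` is B-Fredholm with `a_e(T) = d_e(T) = d`, and `d = 0` or `R(T ^ (d - 1))` is
closed, then `0` is a pole of the resolvent of `Π(T)` of order `d`. -/
theorem bFredholm_pole_order_eq (hX : ¬ FiniteDimensional ℂ X) (T : X →L[ℂ] X)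
    (hT : IsBFredholm T) (d : ℕ)
    (ha : essAscent T = (d : ℕ∞)) (hd : essDescent T = (d : ℕ∞))
    (hclosed : d = 0 ∨ IsClosed ((LinearMap.range ((T ^ (d - 1) : X →L[ℂ] X) : X →ₗ[ℂ] X) : Submodule ℂ X) : Set X)) :
    IsLeast {m : ℕ | DrazinAt T m} d :=
  bFredholm_pole_order_eq_general T hT d ha hd hclosed
end
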